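/- arXiv:2508.13802 — 3 statements merged into one kernel-verified Lean document; each statement's English description precedes it below -/
import Mathlib

section
/- Let f(t) = exp(Y₁ q₁(t)) · exp(Y₂ q₂(t)) · … · exp(Yₙ qₙ(t)) be a product of matrix exponentials with smooth scalar functions qᵢ, where Y₁,…,Yₙ are fixed square matrices. Then f'(t) = (Σ_{i=1}^n Sᵢ(t) · qᵢ'(t)) · f(t), where Sᵢ(t) := gᵢ(t) · Yᵢ · gᵢ(t)⁻¹ and gᵢ(t) := exp(Y₁q₁(t))·…·exp(Yᵢqᵢ(t)). -/
open scoped Matrix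

/-- The partial product `gᵢ(t) = exp(Y₁q₁(t))⋯exp(Yᵢqᵢ(t))` (0-indexed, `i` inclusive). -/
noncomputable def poePartial {m n : ℕ} (Y : Fin n → Matrix (Fin m) (Fin m) ℝ)
    (q : Fin n → ℝ → ℝ) (i : Fin n) (t : ℝ) : Matrix (Fin m) (Fin m) ℝ :=
  ((List.ofFn fun j : Fin n => NormedSpace.exp (q j t • Y j)).take ((i : ℕ) + 1)).prod

/-- The product of exponentials `f(t) = exp(Y₁q₁(t))⋯exp(Yₙqₙ(t))`. -/
noncomputable def poeCurve {m n : ℕ} (Y : Fin n → Matrix (Fin m) (Fin m) ℝ)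
    (q : Fin n → ℝ → ℝ) (t : ℝ) : Matrix (Fin m) (Fin m) ℝ :=
  (List.ofFn fun j : Fin n => NormedSpace.exp (q j t • Y j)).prod

/-- The instantaneous joint screw `Sᵢ(t) = gᵢ(t)·Yᵢ·gᵢ(t)⁻¹`. -/
noncomputable def poeScrew {m n : ℕ} (Y : Fin n → Matrix (Fin m) (Fin m) ℝ)
    (q : Fin n → ℝ → ℝ) (i : Fin n) (t : ℝ) : Matrix (Fin m) (Fin m) ℝ :=
  poePartial Y q i t * Y i * (poePartial Y q i t)⁻¹

section Aux

attribute [local instance] Matrix.linftyOpNormedRing Matrix.linftyOpNormedAlgebra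

variable {m n : ℕ} (Y : Fin n → Matrix (Fin m) (Fin m) ℝ) (q : Fin n → ℝ → ℝ)

/-- The tail product from index `i` on. -/
noncomputable def poeDrop (i : ℕ) (t : ℝ) : Matrix (Fin m) (Fin m) ℝ :=
  ((List.ofFn fun j : Fin n => NormedSpace.exp (q j t • Y j)).drop i).prod

lemma hasDerivAt_expterm (hq : ∀ i, ContDiff ℝ (⊤ : ℕ∞) (q i)) (i : Fin n) (t : ℝ) :
    HasDerivAt (fun s => NormedSpace.exp (q i s • Y i))
      (deriv (q i) t • (NormedSpace.exp (q i t • Y i) * Y i)) t := by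
  have h1 : HasDerivAt (q i) (deriv (q i) t) t :=
    (((hq i).differentiable (by simp)) t).hasDerivAt
  have h2 := hasDerivAt_exp_smul_const (𝕂 := ℝ) (Y i) (q i t)
  exact h2.scomp t h1

lemma poe_term_commute (i : Fin n) (t : ℝ) :
    NormedSpace.exp (q i t • Y i) * Y i = Y i * NormedSpace.exp (q i t • Y i) :=
  (((Commute.refl (Y i)).smul_left (q i t)).exp_left)

lemma hasDerivAt_poeCurve (hq : ∀ i, ContDiff ℝ (⊤ : ℕ∞) (q i)) (t : ℝ) :
    HasDerivAt (fun s => poeCurve Y q s)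
      (∑ i : Fin n, deriv (q i) t • (poePartial Y q i t * Y i * poeDrop Y q ((i : ℕ) + 1) t)) t := by
  classical
  set f : Fin n → ℝ → Matrix (Fin m) (Fin m) ℝ :=
    fun j s => NormedSpace.exp (q j s • Y j) with hf
  set d : Fin n → Matrix (Fin m) (Fin m) ℝ :=
    fun j => deriv (q j) t • (NormedSpace.exp (q j t • Y j) * Y j) with hd
  have H := HasFDerivAt.list_prod' (𝕜 := ℝ) (l := List.finRange n) (x := t)
    (f := f)
    (f' := fun j => ContinuousLinearMap.smulRight (1 : ℝ →L[ℝ] ℝ) (d j))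
    (fun i _ => (hasDerivAt_expterm Y q hq i t).hasFDerivAt)
  have H' := H.hasDerivAt
  have hfun : (fun x => ((List.finRange n).map (f · x)).prod) = fun s => poeCurve Y q s := by
    funext s
    simp [poeCurve, List.ofFn_eq_map, hf]
  rw [hfun] at H'
  convert H' using 1
  rotate_right
  have hlen : (List.finRange n).length = n := List.length_finRange
  simp only [ContinuousLinearMap.coe_sum', Finset.sum_apply, ContinuousLinearMap.smul_apply,
    ContinuousLinearMap.smulRight_apply, ContinuousLinearMap.one_apply, one_smul,
    MulOpposite.smul_eq_mul_unop, MulOpposite.unop_op]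
  refine Finset.sum_equiv (finCongr hlen.symm) (by simp) ?_
  intro i _
  have hi : (i : ℕ) < (List.finRange n).length := by simp [hlen, i.isLt]
  have hgetelem : (List.finRange n)[(finCongr hlen.symm i : Fin (List.finRange n).length)] = i := by
    simp
  simp only [Fin.getElem_fin, List.getElem_finRange, finCongr_apply, Fin.coe_cast, Fin.cast_mk, Fin.eta]
  have htake : (((List.finRange n).take (i : ℕ)).map (f · t)) =
      ((List.ofFn fun j : Fin n => NormedSpace.exp (q j t • Y j)).take (i : ℕ)) := by
    rw [List.ofFn_eq_map, List.map_take]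
  have hdrop : (((List.finRange n).drop ((i : ℕ) + 1)).map (f · t)) =
      ((List.ofFn fun j : Fin n => NormedSpace.exp (q j t • Y j)).drop ((i : ℕ) + 1)) := by
    rw [List.ofFn_eq_map, List.map_drop]
  have hL : ((List.ofFn fun j : Fin n => NormedSpace.exp (q j t • Y j)).take ((i : ℕ) + 1)).prod
      = ((List.ofFn fun j : Fin n => NormedSpace.exp (q j t • Y j)).take (i : ℕ)).prod
        * NormedSpace.exp (q i t • Y i) := by
    have hi' : (i : ℕ) < (List.ofFn fun j : Fin n => NormedSpace.exp (q j t • Y j)).length := by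
      simp [i.isLt]
    rw [List.prod_take_succ _ _ hi']
    congr 1
    simp
  -- goal: deriv (q i) t • (poePartial * Y i * poeDrop) = takeprod • (d i * dropprod)
  show deriv (q i) t • (poePartial Y q i t * Y i * poeDrop Y q ((i : ℕ) + 1) t)
      = (((List.finRange n).take (i : ℕ)).map (f · t)).prod •
        (d i * (((List.finRange n).drop ((i : ℕ) + 1)).map (f · t)).prod)
  rw [htake, hdrop]
  simp only [smul_eq_mul, hd, poePartial, poeDrop, hL, mul_smul_comm, smul_mul_assoc,
    mul_assoc]
  all_goals rfl

lemma poePartial_isUnit (i : Fin n) (t : ℝ) : IsUnit (poePartial Y q i t) := by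
  apply List.prod_isUnit
  intro x hx
  have hx' := List.take_subset _ _ hx
  rcases List.mem_ofFn.mp hx' with ⟨j, rfl⟩
  exact Matrix.isUnit_exp _

lemma poeCurve_eq_partial_mul_drop (i : Fin n) (t : ℝ) :
    poeCurve Y q t = poePartial Y q i t * poeDrop Y q ((i : ℕ) + 1) t := by
  rw [poeCurve, poePartial, poeDrop, ← List.prod_append, List.take_append_drop]

end Aux

/-- The product-of-exponentials velocity formula:
`f'(t) = (∑ᵢ Sᵢ(t)·qᵢ'(t)) · f(t)`, with the derivative taken entrywise. -/
theorem poe_velocity_formula {m n : ℕ}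
    (Y : Fin n → Matrix (Fin m) (Fin m) ℝ)
    (q : Fin n → ℝ → ℝ) (hq : ∀ i, ContDiff ℝ (⊤ : ℕ∞) (q i)) (t : ℝ) :
    (Matrix.of fun a b => deriv (fun s => poeCurve Y q s a b) t) =
      (∑ i, deriv (q i) t • poeScrew Y q i t) * poeCurve Y q t := by
  classical
  letI : NormedRing (Matrix (Fin m) (Fin m) ℝ) := Matrix.linftyOpNormedRing
  letI : NormedAlgebra ℝ (Matrix (Fin m) (Fin m) ℝ) := Matrix.linftyOpNormedAlgebra
  set D : Matrix (Fin m) (Fin m) ℝ :=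
    ∑ i : Fin n, deriv (q i) t • (poePartial Y q i t * Y i * poeDrop Y q ((i : ℕ) + 1) t) with hD
  have hderiv : HasDerivAt (fun s => poeCurve Y q s) D t := hasDerivAt_poeCurve Y q hq t
  have hRHS : (∑ i, deriv (q i) t • poeScrew Y q i t) * poeCurve Y q t = D := by
    rw [Finset.sum_mul, hD]
    refine Finset.sum_congr rfl fun i _ => ?_
    rw [smul_mul_assoc]
    congr 1
    rw [poeScrew, poeCurve_eq_partial_mul_drop Y q i t]
    have hu := (Matrix.isUnit_iff_isUnit_det _).mp (poePartial_isUnit Y q i t)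
    rw [Matrix.mul_assoc (poePartial Y q i t * Y i)]
    congr 1
    rw [← Matrix.mul_assoc, Matrix.nonsing_inv_mul _ hu, Matrix.one_mul]
  rw [hRHS]
  ext a b
  simp only [Matrix.of_apply]
  have hab : HasDerivAt (fun s => poeCurve Y q s a b) (D a b) t := by
    let L : Matrix (Fin m) (Fin m) ℝ →L[ℝ] ℝ :=
      LinearMap.toContinuousLinearMap ((LinearMap.proj b).comp (LinearMap.proj (R := ℝ)
        (φ := fun _ : Fin m => Fin m → ℝ) a))
    exact L.hasFDerivAt.comp_hasDerivAt t hderiv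
  exact hab.deriv
end

section
/- For the planar 4-bar linkage at its reference configuration, the solution set of the first- and second-order closure conditions {x ∈ ℝ⁴ : x₁+x₂+x₃+x₄ = 0, x₁+2x₂+x₃ = 0, (x₁+x₂+x₃+x₄)² = 0, x₁² + 4x₂x₁ + 2x₂² + x₃² + 2(x₁+x₂)x₃ = 0} equals the union of the two lines V(x₁+x₃, x₂, x₄) ∪ V(x₁+x₂, x₃+x₂, x₄−x₂) in ℝ⁴. -/
/-- The solution set of the first- and second-order closure conditions of the planar
4-bar linkage at its reference configuration equals the union of the two lines
`V(x₁+x₃, x₂, x₄) ∪ V(x₁+x₂, x₃+x₂, x₄−x₂)` (indices `x₁,…,x₄` are `x 0,…,x 3`). -/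
theorem fourBar_secondOrder_approximation :
    {x : Fin 4 → ℝ |
        x 0 + x 1 + x 2 + x 3 = 0 ∧
        x 0 + 2 * x 1 + x 2 = 0 ∧
        (x 0 + x 1 + x 2 + x 3) ^ 2 = 0 ∧
        x 0 ^ 2 + 4 * x 1 * x 0 + 2 * x 1 ^ 2 + x 2 ^ 2 + 2 * (x 0 + x 1) * x 2 = 0} =
      {x : Fin 4 → ℝ | x 0 + x 2 = 0 ∧ x 1 = 0 ∧ x 3 = 0} ∪
      {x : Fin 4 → ℝ | x 0 + x 1 = 0 ∧ x 2 + x 1 = 0 ∧ x 3 - x 1 = 0} := by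
  ext x
  simp only [Set.mem_setOf_eq, Set.mem_union]
  constructor
  · rintro ⟨h1, h2, h3, h4⟩
    have key : x 1 * (x 0 + x 1) = 0 := by linear_combination h4 / 2 - (x 0 + x 2) / 2 * h2
    rcases mul_eq_zero.mp key with h | h
    · left; refine ⟨by linarith, h, by linarith⟩
    · right
      have hx2 : x 2 + x 1 = 0 := by linarith
      exact ⟨by linarith, hx2, by linarith⟩
  · rintro (⟨h1, h2, h3⟩ | ⟨h1, h2, h3⟩)
    · exact ⟨by linarith, by linarith, by nlinarith,
        by linear_combination (x 0 + x 2) * h1 + (4 * x 0 + 2 * x 1 + 2 * x 2) * h2⟩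
    · exact ⟨by linarith, by linarith, by nlinarith,
        by linear_combination (x 0 + 2 * x 1 + x 2) * h1 + (x 0 + x 2) * h2⟩
end

section
/- The kernel of the 18×10 double-Watt Jacobian J (as defined from the screws Y₁,…,Y₁₀ above) equals the 2-dimensional linear space V(x₁+x₂, x₁+x₃, x₁−x₄, x₅+x₆, x₅−x₇, x₅+x₈, x₁−x₅−3x₉, x₁−x₅+3x₁₀) ⊆ ℝ¹⁰. -/
/-- Columns of the first loop Jacobian `J₁ = (Y₁,Y₂,0,0,Y₅,Y₆,0,0,Y₉,Y₁₀)`. -/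
noncomputable def wattCols1 : Fin 10 → Fin 6 → ℝ :=
  ![![0, 0, 1, 0, 0, 0], ![0, 0, 1, 0, 1, 0], 0, 0,
    ![0, 0, 1, 0, 0, 0], ![0, 0, 1, 0, -1, 0], 0, 0,
    ![0, 0, 1, -1/2, 3/2, 0], ![0, 0, 1, -1/2, -3/2, 0]]

/-- Columns of the second loop Jacobian `J₂ = (Y₁,Y₂,Y₃,Y₄,0,…,0)`. -/
noncomputable def wattCols2 : Fin 10 → Fin 6 → ℝ :=
  ![![0, 0, 1, 0, 0, 0], ![0, 0, 1, 0, 1, 0], ![0, 0, 1, -1, 2, 0],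
    ![0, 0, 1, -1, 3, 0], 0, 0, 0, 0, 0, 0]

/-- Columns of the third loop Jacobian `J₃ = (0,0,0,0,−Y₅,−Y₆,Y₇,Y₈,0,0)`. -/
noncomputable def wattCols3 : Fin 10 → Fin 6 → ℝ :=
  ![0, 0, 0, 0, -![0, 0, 1, 0, 0, 0], -![0, 0, 1, 0, -1, 0],
    ![0, 0, 1, -1, -2, 0], ![0, 0, 1, -1, -3, 0], 0, 0]

/-- The stacked `18 × 10` constraint Jacobian `J = (J₁; J₂; J₃)` of the double-Watt
linkage at its reference configuration. -/
noncomputable def wattJacobian : Matrix (Fin 18) (Fin 10) ℝ :=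
  Matrix.of fun i j =>
    if h : (i : ℕ) < 6 then wattCols1 j ⟨i, h⟩
    else if h2 : (i : ℕ) < 12 then wattCols2 j ⟨(i : ℕ) - 6, by omega⟩
    else wattCols3 j ⟨(i : ℕ) - 12, by omega⟩

lemma sum10 {M : Type*} [AddCommMonoid M] (f : Fin 10 → M) :
    ∑ i, f i = f 0 + f 1 + f 2 + f 3 + f 4 + f 5 + f 6 + f 7 + f 8 + f 9 := by
  rw [Fin.sum_univ_castSucc, Fin.sum_univ_castSucc, Fin.sum_univ_eight]; rfl
lemma wrow0 (x : Fin 10 → ℝ) : wattJacobian.mulVec x 0 = 0 := by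
  have h : wattJacobian.mulVec x 0 = ∑ j, wattJacobian 0 j * x j := rfl
  rw [h, sum10, show wattJacobian 0 0 = 0 from rfl, show wattJacobian 0 1 = 0 from rfl, show wattJacobian 0 2 = 0 from rfl, show wattJacobian 0 3 = 0 from rfl, show wattJacobian 0 4 = 0 from rfl, show wattJacobian 0 5 = 0 from rfl, show wattJacobian 0 6 = 0 from rfl, show wattJacobian 0 7 = 0 from rfl, show wattJacobian 0 8 = 0 from rfl, show wattJacobian 0 9 = 0 from rfl]
  ring

lemma wrow1 (x : Fin 10 → ℝ) : wattJacobian.mulVec x 1 = 0 := by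
  have h : wattJacobian.mulVec x 1 = ∑ j, wattJacobian 1 j * x j := rfl
  rw [h, sum10, show wattJacobian 1 0 = 0 from rfl, show wattJacobian 1 1 = 0 from rfl, show wattJacobian 1 2 = 0 from rfl, show wattJacobian 1 3 = 0 from rfl, show wattJacobian 1 4 = 0 from rfl, show wattJacobian 1 5 = 0 from rfl, show wattJacobian 1 6 = 0 from rfl, show wattJacobian 1 7 = 0 from rfl, show wattJacobian 1 8 = 0 from rfl, show wattJacobian 1 9 = 0 from rfl]
  ring

lemma wrow2 (x : Fin 10 → ℝ) : wattJacobian.mulVec x 2 = x 0 + x 1 + x 4 + x 5 + x 8 + x 9 := by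
  have h : wattJacobian.mulVec x 2 = ∑ j, wattJacobian 2 j * x j := rfl
  rw [h, sum10, show wattJacobian 2 0 = 1 from rfl, show wattJacobian 2 1 = 1 from rfl, show wattJacobian 2 2 = 0 from rfl, show wattJacobian 2 3 = 0 from rfl, show wattJacobian 2 4 = 1 from rfl, show wattJacobian 2 5 = 1 from rfl, show wattJacobian 2 6 = 0 from rfl, show wattJacobian 2 7 = 0 from rfl, show wattJacobian 2 8 = 1 from rfl, show wattJacobian 2 9 = 1 from rfl]
  ring

lemma wrow3 (x : Fin 10 → ℝ) : wattJacobian.mulVec x 3 = -(x 8)/2 - (x 9)/2 := by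
  have h : wattJacobian.mulVec x 3 = ∑ j, wattJacobian 3 j * x j := rfl
  rw [h, sum10, show wattJacobian 3 0 = 0 from rfl, show wattJacobian 3 1 = 0 from rfl, show wattJacobian 3 2 = 0 from rfl, show wattJacobian 3 3 = 0 from rfl, show wattJacobian 3 4 = 0 from rfl, show wattJacobian 3 5 = 0 from rfl, show wattJacobian 3 6 = 0 from rfl, show wattJacobian 3 7 = 0 from rfl, show wattJacobian 3 8 = -1/2 from rfl, show wattJacobian 3 9 = -1/2 from rfl]
  ring

lemma wrow4 (x : Fin 10 → ℝ) : wattJacobian.mulVec x 4 = x 1 - x 5 + 3/2 * x 8 - 3/2 * x 9 := by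
  have h : wattJacobian.mulVec x 4 = ∑ j, wattJacobian 4 j * x j := rfl
  rw [h, sum10, show wattJacobian 4 0 = 0 from rfl, show wattJacobian 4 1 = 1 from rfl, show wattJacobian 4 2 = 0 from rfl, show wattJacobian 4 3 = 0 from rfl, show wattJacobian 4 4 = 0 from rfl, show wattJacobian 4 5 = -1 from rfl, show wattJacobian 4 6 = 0 from rfl, show wattJacobian 4 7 = 0 from rfl, show wattJacobian 4 8 = 3/2 from rfl, show wattJacobian 4 9 = -3/2 from rfl]
  ring

lemma wrow5 (x : Fin 10 → ℝ) : wattJacobian.mulVec x 5 = 0 := by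
  have h : wattJacobian.mulVec x 5 = ∑ j, wattJacobian 5 j * x j := rfl
  rw [h, sum10, show wattJacobian 5 0 = 0 from rfl, show wattJacobian 5 1 = 0 from rfl, show wattJacobian 5 2 = 0 from rfl, show wattJacobian 5 3 = 0 from rfl, show wattJacobian 5 4 = 0 from rfl, show wattJacobian 5 5 = 0 from rfl, show wattJacobian 5 6 = 0 from rfl, show wattJacobian 5 7 = 0 from rfl, show wattJacobian 5 8 = 0 from rfl, show wattJacobian 5 9 = 0 from rfl]
  ring

lemma wrow6 (x : Fin 10 → ℝ) : wattJacobian.mulVec x 6 = 0 := by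
  have h : wattJacobian.mulVec x 6 = ∑ j, wattJacobian 6 j * x j := rfl
  rw [h, sum10, show wattJacobian 6 0 = 0 from rfl, show wattJacobian 6 1 = 0 from rfl, show wattJacobian 6 2 = 0 from rfl, show wattJacobian 6 3 = 0 from rfl, show wattJacobian 6 4 = 0 from rfl, show wattJacobian 6 5 = 0 from rfl, show wattJacobian 6 6 = 0 from rfl, show wattJacobian 6 7 = 0 from rfl, show wattJacobian 6 8 = 0 from rfl, show wattJacobian 6 9 = 0 from rfl]
  ring

lemma wrow7 (x : Fin 10 → ℝ) : wattJacobian.mulVec x 7 = 0 := by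
  have h : wattJacobian.mulVec x 7 = ∑ j, wattJacobian 7 j * x j := rfl
  rw [h, sum10, show wattJacobian 7 0 = 0 from rfl, show wattJacobian 7 1 = 0 from rfl, show wattJacobian 7 2 = 0 from rfl, show wattJacobian 7 3 = 0 from rfl, show wattJacobian 7 4 = 0 from rfl, show wattJacobian 7 5 = 0 from rfl, show wattJacobian 7 6 = 0 from rfl, show wattJacobian 7 7 = 0 from rfl, show wattJacobian 7 8 = 0 from rfl, show wattJacobian 7 9 = 0 from rfl]
  ring

lemma wrow8 (x : Fin 10 → ℝ) : wattJacobian.mulVec x 8 = x 0 + x 1 + x 2 + x 3 := by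
  have h : wattJacobian.mulVec x 8 = ∑ j, wattJacobian 8 j * x j := rfl
  rw [h, sum10, show wattJacobian 8 0 = 1 from rfl, show wattJacobian 8 1 = 1 from rfl, show wattJacobian 8 2 = 1 from rfl, show wattJacobian 8 3 = 1 from rfl, show wattJacobian 8 4 = 0 from rfl, show wattJacobian 8 5 = 0 from rfl, show wattJacobian 8 6 = 0 from rfl, show wattJacobian 8 7 = 0 from rfl, show wattJacobian 8 8 = 0 from rfl, show wattJacobian 8 9 = 0 from rfl]
  ring

lemma wrow9 (x : Fin 10 → ℝ) : wattJacobian.mulVec x 9 = -(x 2) - x 3 := by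
  have h : wattJacobian.mulVec x 9 = ∑ j, wattJacobian 9 j * x j := rfl
  rw [h, sum10, show wattJacobian 9 0 = 0 from rfl, show wattJacobian 9 1 = 0 from rfl, show wattJacobian 9 2 = -1 from rfl, show wattJacobian 9 3 = -1 from rfl, show wattJacobian 9 4 = 0 from rfl, show wattJacobian 9 5 = 0 from rfl, show wattJacobian 9 6 = 0 from rfl, show wattJacobian 9 7 = 0 from rfl, show wattJacobian 9 8 = 0 from rfl, show wattJacobian 9 9 = 0 from rfl]
  ring

lemma wrow10 (x : Fin 10 → ℝ) : wattJacobian.mulVec x 10 = x 1 + 2 * x 2 + 3 * x 3 := by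
  have h : wattJacobian.mulVec x 10 = ∑ j, wattJacobian 10 j * x j := rfl
  rw [h, sum10, show wattJacobian 10 0 = 0 from rfl, show wattJacobian 10 1 = 1 from rfl, show wattJacobian 10 2 = 2 from rfl, show wattJacobian 10 3 = 3 from rfl, show wattJacobian 10 4 = 0 from rfl, show wattJacobian 10 5 = 0 from rfl, show wattJacobian 10 6 = 0 from rfl, show wattJacobian 10 7 = 0 from rfl, show wattJacobian 10 8 = 0 from rfl, show wattJacobian 10 9 = 0 from rfl]
  ring

lemma wrow11 (x : Fin 10 → ℝ) : wattJacobian.mulVec x 11 = 0 := by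
  have h : wattJacobian.mulVec x 11 = ∑ j, wattJacobian 11 j * x j := rfl
  rw [h, sum10, show wattJacobian 11 0 = 0 from rfl, show wattJacobian 11 1 = 0 from rfl, show wattJacobian 11 2 = 0 from rfl, show wattJacobian 11 3 = 0 from rfl, show wattJacobian 11 4 = 0 from rfl, show wattJacobian 11 5 = 0 from rfl, show wattJacobian 11 6 = 0 from rfl, show wattJacobian 11 7 = 0 from rfl, show wattJacobian 11 8 = 0 from rfl, show wattJacobian 11 9 = 0 from rfl]
  ring

lemma wrow12 (x : Fin 10 → ℝ) : wattJacobian.mulVec x 12 = 0 := by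
  have h : wattJacobian.mulVec x 12 = ∑ j, wattJacobian 12 j * x j := rfl
  rw [h, sum10, show wattJacobian 12 0 = 0 from rfl, show wattJacobian 12 1 = 0 from rfl, show wattJacobian 12 2 = 0 from rfl, show wattJacobian 12 3 = 0 from rfl, show wattJacobian 12 4 = -0 from rfl, show wattJacobian 12 5 = -0 from rfl, show wattJacobian 12 6 = 0 from rfl, show wattJacobian 12 7 = 0 from rfl, show wattJacobian 12 8 = 0 from rfl, show wattJacobian 12 9 = 0 from rfl]
  ring

lemma wrow13 (x : Fin 10 → ℝ) : wattJacobian.mulVec x 13 = 0 := by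
  have h : wattJacobian.mulVec x 13 = ∑ j, wattJacobian 13 j * x j := rfl
  rw [h, sum10, show wattJacobian 13 0 = 0 from rfl, show wattJacobian 13 1 = 0 from rfl, show wattJacobian 13 2 = 0 from rfl, show wattJacobian 13 3 = 0 from rfl, show wattJacobian 13 4 = -0 from rfl, show wattJacobian 13 5 = -0 from rfl, show wattJacobian 13 6 = 0 from rfl, show wattJacobian 13 7 = 0 from rfl, show wattJacobian 13 8 = 0 from rfl, show wattJacobian 13 9 = 0 from rfl]
  ring

lemma wrow14 (x : Fin 10 → ℝ) : wattJacobian.mulVec x 14 = -(x 4) - x 5 + x 6 + x 7 := by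
  have h : wattJacobian.mulVec x 14 = ∑ j, wattJacobian 14 j * x j := rfl
  rw [h, sum10, show wattJacobian 14 0 = 0 from rfl, show wattJacobian 14 1 = 0 from rfl, show wattJacobian 14 2 = 0 from rfl, show wattJacobian 14 3 = 0 from rfl, show wattJacobian 14 4 = -1 from rfl, show wattJacobian 14 5 = -1 from rfl, show wattJacobian 14 6 = 1 from rfl, show wattJacobian 14 7 = 1 from rfl, show wattJacobian 14 8 = 0 from rfl, show wattJacobian 14 9 = 0 from rfl]
  ring

lemma wrow15 (x : Fin 10 → ℝ) : wattJacobian.mulVec x 15 = -(x 6) - x 7 := by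
  have h : wattJacobian.mulVec x 15 = ∑ j, wattJacobian 15 j * x j := rfl
  rw [h, sum10, show wattJacobian 15 0 = 0 from rfl, show wattJacobian 15 1 = 0 from rfl, show wattJacobian 15 2 = 0 from rfl, show wattJacobian 15 3 = 0 from rfl, show wattJacobian 15 4 = -0 from rfl, show wattJacobian 15 5 = -0 from rfl, show wattJacobian 15 6 = -1 from rfl, show wattJacobian 15 7 = -1 from rfl, show wattJacobian 15 8 = 0 from rfl, show wattJacobian 15 9 = 0 from rfl]
  ring

lemma wrow16 (x : Fin 10 → ℝ) : wattJacobian.mulVec x 16 = x 5 - 2 * x 6 - 3 * x 7 := by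
  have h : wattJacobian.mulVec x 16 = ∑ j, wattJacobian 16 j * x j := rfl
  rw [h, sum10, show wattJacobian 16 0 = 0 from rfl, show wattJacobian 16 1 = 0 from rfl, show wattJacobian 16 2 = 0 from rfl, show wattJacobian 16 3 = 0 from rfl, show wattJacobian 16 4 = -0 from rfl, show wattJacobian 16 5 = -(-1) from rfl, show wattJacobian 16 6 = -2 from rfl, show wattJacobian 16 7 = -3 from rfl, show wattJacobian 16 8 = 0 from rfl, show wattJacobian 16 9 = 0 from rfl]
  ring

lemma wrow17 (x : Fin 10 → ℝ) : wattJacobian.mulVec x 17 = 0 := by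
  have h : wattJacobian.mulVec x 17 = ∑ j, wattJacobian 17 j * x j := rfl
  rw [h, sum10, show wattJacobian 17 0 = 0 from rfl, show wattJacobian 17 1 = 0 from rfl, show wattJacobian 17 2 = 0 from rfl, show wattJacobian 17 3 = 0 from rfl, show wattJacobian 17 4 = -0 from rfl, show wattJacobian 17 5 = -0 from rfl, show wattJacobian 17 6 = 0 from rfl, show wattJacobian 17 7 = 0 from rfl, show wattJacobian 17 8 = 0 from rfl, show wattJacobian 17 9 = 0 from rfl]
  ring

lemma mem_ker_iff (x : Fin 10 → ℝ) : x ∈ LinearMap.ker wattJacobian.mulVecLin ↔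
    (x 0 + x 1 = 0 ∧ x 0 + x 2 = 0 ∧ x 0 - x 3 = 0 ∧
     x 4 + x 5 = 0 ∧ x 4 - x 6 = 0 ∧ x 4 + x 7 = 0 ∧
     x 0 - x 4 - 3 * x 8 = 0 ∧ x 0 - x 4 + 3 * x 9 = 0) := by
  rw [LinearMap.mem_ker]
  constructor
  · intro h
    simp only [Matrix.mulVecLin_apply] at h
    have e2 : x 0 + x 1 + x 4 + x 5 + x 8 + x 9 = 0 := by
      have := congrFun h 2; rwa [wrow2, Pi.zero_apply] at this
    have e3 : -(x 8)/2 - (x 9)/2 = 0 := by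
      have := congrFun h 3; rwa [wrow3, Pi.zero_apply] at this
    have e4 : x 1 - x 5 + 3/2 * x 8 - 3/2 * x 9 = 0 := by
      have := congrFun h 4; rwa [wrow4, Pi.zero_apply] at this
    have e8 : x 0 + x 1 + x 2 + x 3 = 0 := by
      have := congrFun h 8; rwa [wrow8, Pi.zero_apply] at this
    have e9 : -(x 2) - x 3 = 0 := by
      have := congrFun h 9; rwa [wrow9, Pi.zero_apply] at this
    have e10 : x 1 + 2 * x 2 + 3 * x 3 = 0 := by
      have := congrFun h 10; rwa [wrow10, Pi.zero_apply] at this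
    have e14 : -(x 4) - x 5 + x 6 + x 7 = 0 := by
      have := congrFun h 14; rwa [wrow14, Pi.zero_apply] at this
    have e15 : -(x 6) - x 7 = 0 := by
      have := congrFun h 15; rwa [wrow15, Pi.zero_apply] at this
    have e16 : x 5 - 2 * x 6 - 3 * x 7 = 0 := by
      have := congrFun h 16; rwa [wrow16, Pi.zero_apply] at this
    refine ⟨by linarith, by linarith, by linarith, by linarith, by linarith, by linarith,
      by linarith, by linarith⟩
  · rintro ⟨h1, h2, h3, h4, h5, h6, h7, h8⟩
    simp only [Matrix.mulVecLin_apply]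
    funext i
    simp only [Pi.zero_apply]
    fin_cases i
    · exact wrow0 x
    · exact wrow1 x
    · refine (wrow2 x).trans ?_
      linarith
    · refine (wrow3 x).trans ?_
      linarith
    · refine (wrow4 x).trans ?_
      linarith
    · exact wrow5 x
    · exact wrow6 x
    · exact wrow7 x
    · refine (wrow8 x).trans ?_
      linarith
    · refine (wrow9 x).trans ?_
      linarith
    · refine (wrow10 x).trans ?_
      linarith
    · exact wrow11 x
    · exact wrow12 x
    · exact wrow13 x
    · refine (wrow14 x).trans ?_
      linarith
    · refine (wrow15 x).trans ?_
      linarith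
    · refine (wrow16 x).trans ?_
      linarith
    · exact wrow17 x

noncomputable def wv1 : Fin 10 → ℝ := ![1, -1, -1, 1, 0, 0, 0, 0, 1/3, -1/3]
noncomputable def wv2 : Fin 10 → ℝ := ![0, 0, 0, 0, 1, -1, 1, -1, -1/3, 1/3]

lemma ker_eq_span : LinearMap.ker wattJacobian.mulVecLin = Submodule.span ℝ {wv1, wv2} := by
  apply le_antisymm
  · intro x hx
    rw [mem_ker_iff] at hx
    obtain ⟨h1, h2, h3, h4, h5, h6, h7, h8⟩ := hx
    rw [Submodule.mem_span_pair]
    refine ⟨x 0, x 4, funext fun j => ?_⟩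
    fin_cases j
    · show x 0 * (1) + x 4 * (0) = x 0
      linarith
    · show x 0 * (-1) + x 4 * (0) = x 1
      linarith
    · show x 0 * (-1) + x 4 * (0) = x 2
      linarith
    · show x 0 * (1) + x 4 * (0) = x 3
      linarith
    · show x 0 * (0) + x 4 * (1) = x 4
      linarith
    · show x 0 * (0) + x 4 * (-1) = x 5
      linarith
    · show x 0 * (0) + x 4 * (1) = x 6
      linarith
    · show x 0 * (0) + x 4 * (-1) = x 7
      linarith
    · show x 0 * (1/3) + x 4 * (-1/3) = x 8
      linarith
    · show x 0 * (-1/3) + x 4 * (1/3) = x 9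
      linarith
  · rw [Submodule.span_le]
    intro y hy
    simp only [Set.mem_insert_iff, Set.mem_singleton_iff] at hy
    rcases hy with rfl | rfl
    · rw [SetLike.mem_coe, mem_ker_iff]
      norm_num [show wv1 0 = 1 from rfl, show wv1 1 = -1 from rfl, show wv1 2 = -1 from rfl, show wv1 3 = 1 from rfl, show wv1 4 = 0 from rfl, show wv1 5 = 0 from rfl, show wv1 6 = 0 from rfl, show wv1 7 = 0 from rfl, show wv1 8 = 1/3 from rfl, show wv1 9 = -1/3 from rfl]
    · rw [SetLike.mem_coe, mem_ker_iff]
      norm_num [show wv2 0 = 0 from rfl, show wv2 1 = 0 from rfl, show wv2 2 = 0 from rfl, show wv2 3 = 0 from rfl, show wv2 4 = 1 from rfl, show wv2 5 = -1 from rfl, show wv2 6 = 1 from rfl, show wv2 7 = -1 from rfl, show wv2 8 = -1/3 from rfl, show wv2 9 = 1/3 from rfl]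

lemma wv_indep : LinearIndependent ℝ ![wv1, wv2] := by
  rw [LinearIndependent.pair_iff]
  intro s t hst
  constructor
  · have h0 := congrFun hst 0
    simp only [Pi.add_apply, Pi.smul_apply, smul_eq_mul, Pi.zero_apply,
      show wv1 0 = 1 from rfl, show wv2 0 = 0 from rfl] at h0
    linarith
  · have h4 := congrFun hst 4
    simp only [Pi.add_apply, Pi.smul_apply, smul_eq_mul, Pi.zero_apply,
      show wv1 4 = 0 from rfl, show wv2 4 = 1 from rfl] at h4
    linarith

/-- The kernel of the double-Watt Jacobian equals the 2-dimensional linear space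
`V(x₁+x₂, x₁+x₃, x₁−x₄, x₅+x₆, x₅−x₇, x₅+x₈, x₁−x₅−3x₉, x₁−x₅+3x₁₀) ⊆ ℝ¹⁰`
(indices `x₁,…,x₁₀` are `x 0,…,x 9`). -/
theorem wattJacobian_kernel :
    (LinearMap.ker wattJacobian.mulVecLin : Set (Fin 10 → ℝ)) =
      {x : Fin 10 → ℝ |
        x 0 + x 1 = 0 ∧ x 0 + x 2 = 0 ∧ x 0 - x 3 = 0 ∧
        x 4 + x 5 = 0 ∧ x 4 - x 6 = 0 ∧ x 4 + x 7 = 0 ∧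
        x 0 - x 4 - 3 * x 8 = 0 ∧ x 0 - x 4 + 3 * x 9 = 0} ∧
    Module.finrank ℝ (LinearMap.ker wattJacobian.mulVecLin) = 2 := by
  constructor
  · ext x
    rw [SetLike.mem_coe, mem_ker_iff]
    rfl
  · have hr : Set.range ![wv1, wv2] = {wv1, wv2} := by
      rw [Matrix.range_cons, Matrix.range_cons_empty, Set.singleton_union]
    rw [ker_eq_span, ← hr, finrank_span_eq_card wv_indep]
    simp
end
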